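/- arXiv:2204.08786 — 7 statements merged into one kernel-verified Lean document; each statement's English description precedes it below -/
import Mathlib

section
/- Let F : ℝ^n → ℝ^n be continuously differentiable on a neighborhood of p* with F(p*) = 0 and with the Fréchet derivative DF(p*) invertible. Then there exist η̄ > 0, ε > 0 and a constant c ∈ (0,1) such that: for every inexact Newton sequence (p_k) with forcing terms (η_k) satisfying η_k ≤ η̄ for all k, if ‖p_0 − p*‖ ≤ ε then ‖p_{k+1} − p*‖ ≤ c ‖p_k − p*‖ for all k ≥ 0; in particular p_k converges to p* q-linearly. -/
/-!
Let `A = DF(p*)` and fix `μ > 0` with `μ ‖A⁻¹‖ ≤ 1/8`. On a small ball around `p*`, continuity of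
`DF` and differentiability at `p*` give `‖DF(p) - A‖ ≤ μ` and `‖F(p) - A e‖ ≤ μ ‖e‖`, where
`e = p - p*`. For a step `p ↦ p'` with error `e' = p' - p*`, the identity
`A e' = (A e - F p) + (F p + DF(p) (p' - p)) + (A - DF(p)) (p' - p)`
bounds `‖A e'‖` by `3μ‖e‖ + μ‖e'‖` as soon as the forcing term is at most `μ / (‖A‖ + μ)`;
applying `A⁻¹` yields `‖e'‖ ≤ ‖e‖ / 2`. So the ball is invariant and the errors decay
geometrically.
-/

open Filter Topology

theorem IsUnit.exists_norm_le_mul_norm_apply {𝕜 E : Type*} [NontriviallyNormedField 𝕜]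
    [SeminormedAddCommGroup E] [NormedSpace 𝕜 E] {A : E →L[𝕜] E} (hA : IsUnit A) :
    ∃ β ≥ 0, ∀ x, ‖x‖ ≤ β * ‖A x‖ := by
  obtain ⟨u, rfl⟩ := hA
  refine ⟨‖(↑u⁻¹ : E →L[𝕜] E)‖, norm_nonneg _, fun x => ?_⟩
  calc ‖x‖ = ‖(↑u⁻¹ : E →L[𝕜] E) ((u : E →L[𝕜] E) x)‖ := by
        rw [← mul_apply_eq_comp, Units.inv_mul, one_apply_eq_self]
    _ ≤ ‖(↑u⁻¹ : E →L[𝕜] E)‖ * ‖(u : E →L[𝕜] E) x‖ := ContinuousLinearMap.le_opNorm _ _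

theorem ContDiffAt.eventually_norm_fderiv_sub_le_and_norm_sub_le {E F : Type*}
    [NormedAddCommGroup E] [NormedSpace ℝ E] [NormedAddCommGroup F] [NormedSpace ℝ F]
    {f : E → F} {x₀ : E} (hf : ContDiffAt ℝ 1 f x₀) {μ : ℝ} (hμ : 0 < μ) :
    ∀ᶠ x in 𝓝 x₀, ‖fderiv ℝ f x - fderiv ℝ f x₀‖ ≤ μ ∧
      ‖f x - f x₀ - fderiv ℝ f x₀ (x - x₀)‖ ≤ μ * ‖x - x₀‖ := by
  have hderiv := (hf.continuousAt_fderiv one_ne_zero).eventually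
    (Metric.closedBall_mem_nhds _ hμ)
  refine hderiv.and ((hf.differentiableAt one_ne_zero).hasFDerivAt.isLittleO.def hμ) |>.mono ?_
  rintro x ⟨hx, hlin⟩
  exact ⟨mem_closedBall_iff_norm.mp hx, hlin⟩

theorem norm_sub_le_half_of_inexact_newton_step {E F : Type*} [SeminormedAddCommGroup E]
    [NormedSpace ℝ E] [SeminormedAddCommGroup F] [NormedSpace ℝ F] {A J : E →L[ℝ] F}
    {x₀ q q' : E} {y : F} {β μ η : ℝ} (hA : ∀ x, ‖x‖ ≤ β * ‖A x‖) (hβ : 0 ≤ β) (hμ : 0 ≤ μ)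
    (hβμ : β * μ ≤ 1 / 8) (hη : 0 ≤ η) (hημ : η * (‖A‖ + μ) ≤ μ) (hJ : ‖J - A‖ ≤ μ)
    (hy : ‖y - A (q - x₀)‖ ≤ μ * ‖q - x₀‖) (hres : ‖y + J (q' - q)‖ ≤ η * ‖y‖) :
    ‖q' - x₀‖ ≤ 1 / 2 * ‖q - x₀‖ := by
  set e := q - x₀
  set e' := q' - x₀
  have hy_norm : ‖y‖ ≤ (‖A‖ + μ) * ‖e‖ := by
    calc ‖y‖ ≤ ‖y - A e‖ + ‖A e‖ := norm_le_norm_sub_add _ _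
      _ ≤ μ * ‖e‖ + ‖A‖ * ‖e‖ := add_le_add hy (A.le_opNorm e)
      _ = (‖A‖ + μ) * ‖e‖ := by ring
  have hres' : ‖y + J (q' - q)‖ ≤ μ * ‖e‖ := by
    calc ‖y + J (q' - q)‖ ≤ η * ((‖A‖ + μ) * ‖e‖) := hres.trans (by gcongr)
      _ ≤ μ * ‖e‖ := by rw [← mul_assoc]; gcongr
  have hd : ‖q' - q‖ ≤ ‖e‖ + ‖e'‖ := by
    calc ‖q' - q‖ = ‖e' - e‖ := by simp only [e, e', sub_sub_sub_cancel_right]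
      _ ≤ ‖e'‖ + ‖e‖ := norm_sub_le _ _
      _ = ‖e‖ + ‖e'‖ := add_comm _ _
  have hAe' : ‖A e'‖ ≤ 3 * μ * ‖e‖ + μ * ‖e'‖ := by
    have hsplit : A e' = (A e - y) + (y + J (q' - q)) + (A - J) (q' - q) := by
      simp only [e, e', sub_apply, map_sub]
      abel
    calc ‖A e'‖ ≤ ‖A e - y‖ + ‖y + J (q' - q)‖ + ‖(A - J) (q' - q)‖ := by
          rw [hsplit]; exact norm_add₃_le
      _ ≤ μ * ‖e‖ + μ * ‖e‖ + μ * (‖e‖ + ‖e'‖) := by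
          gcongr
          · rwa [norm_sub_rev]
          · exact ((A - J).le_opNorm _).trans (by rw [norm_sub_rev]; gcongr)
      _ = 3 * μ * ‖e‖ + μ * ‖e'‖ := by ring
  have he' := (hA e').trans (mul_le_mul_of_nonneg_left hAe' hβ)
  nlinarith [norm_nonneg e, norm_nonneg e', mul_le_mul_of_nonneg_right hβμ (norm_nonneg e),
    mul_le_mul_of_nonneg_right hβμ (norm_nonneg e')]

theorem qlinear_convergence_of_local_contraction {E : Type*} [SeminormedAddCommGroup E]
    {x : ℕ → E} {a : E} {δ c : ℝ} (hc₀ : 0 ≤ c) (hc₁ : c < 1) (h₀ : ‖x 0 - a‖ ≤ δ)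
    (hstep : ∀ k, ‖x k - a‖ ≤ δ → ‖x (k + 1) - a‖ ≤ c * ‖x k - a‖) :
    (∀ k, ‖x (k + 1) - a‖ ≤ c * ‖x k - a‖) ∧ Tendsto x atTop (𝓝 a) := by
  have hsmall : ∀ k, c ^ k * ‖x 0 - a‖ ≤ δ := fun k =>
    (mul_le_of_le_one_left (norm_nonneg _) (pow_le_one₀ hc₀ hc₁.le)).trans h₀
  have hgeom : ∀ k, ‖x k - a‖ ≤ c ^ k * ‖x 0 - a‖ := by
    intro k
    induction k with
    | zero => simp
    | succ k ih =>
      calc ‖x (k + 1) - a‖ ≤ c * ‖x k - a‖ := hstep k (ih.trans (hsmall k))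
        _ ≤ c * (c ^ k * ‖x 0 - a‖) := by gcongr
        _ = c ^ (k + 1) * ‖x 0 - a‖ := by ring
  refine ⟨fun k => hstep k ((hgeom k).trans (hsmall k)), ?_⟩
  rw [tendsto_iff_norm_sub_tendsto_zero]
  refine squeeze_zero (fun _ => norm_nonneg _) hgeom ?_
  simpa using (tendsto_pow_atTop_nhds_zero_of_lt_one hc₀ hc₁).mul_const ‖x 0 - a‖

/-- Local q-linear convergence of inexact Newton sequences with small forcing terms
(Dembo–Eisenstat–Steihaug, Thm. 2.3, in the unweighted norm). -/
theorem inexact_newton_qlinear_convergence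
    (n : ℕ) (F : EuclideanSpace ℝ (Fin n) → EuclideanSpace ℝ (Fin n))
    (pstar : EuclideanSpace ℝ (Fin n))
    (hF : ∃ U : Set (EuclideanSpace ℝ (Fin n)),
      IsOpen U ∧ pstar ∈ U ∧ ContDiffOn ℝ 1 F U)
    (hroot : F pstar = 0)
    (hinv : IsUnit (fderiv ℝ F pstar)) :
    ∃ ηbar > (0:ℝ), ∃ ε > (0:ℝ), ∃ c : ℝ, 0 < c ∧ c < 1 ∧
      ∀ (p : ℕ → EuclideanSpace ℝ (Fin n)) (η : ℕ → ℝ),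
        (∀ k, 0 ≤ η k) →
        (∀ k, η k ≤ ηbar) →
        (∀ k, ‖F (p k) + (fderiv ℝ F (p k)) (p (k+1) - p k)‖ ≤ η k * ‖F (p k)‖) →
        ‖p 0 - pstar‖ ≤ ε →
        (∀ k, ‖p (k+1) - pstar‖ ≤ c * ‖p k - pstar‖) ∧
        Tendsto p atTop (𝓝 pstar) := by
  obtain ⟨U, hU, hpU, hFU⟩ := hF
  set A := fderiv ℝ F pstar
  obtain ⟨β, hβ, hA⟩ := hinv.exists_norm_le_mul_norm_apply
  set μ : ℝ := 1 / (8 * (β + 1))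
  have hμ : 0 < μ := by positivity
  have hβμ : β * μ ≤ 1 / 8 := by
    rw [show β * μ = β / (8 * (β + 1)) by ring, div_le_iff₀ (by positivity)]
    linarith
  set ηbar : ℝ := μ / (‖A‖ + μ)
  obtain ⟨δ, hδ, hball⟩ := Metric.nhds_basis_closedBall.eventually_iff.mp
    ((hFU.contDiffAt (hU.mem_nhds hpU)).eventually_norm_fderiv_sub_le_and_norm_sub_le hμ)
  refine ⟨ηbar, by positivity, δ, hδ, 1 / 2, by norm_num, by norm_num,
    fun p η hη₀ hηbar hres hp₀ => ?_⟩
  refine qlinear_convergence_of_local_contraction (by norm_num) (by norm_num) hp₀ fun k hk => ?_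
  obtain ⟨hJ, hlin⟩ := hball (mem_closedBall_iff_norm.mpr hk)
  rw [hroot, sub_zero] at hlin
  have hημ : η k * (‖A‖ + μ) ≤ μ := (mul_le_mul_of_nonneg_right (hηbar k) (by positivity)).trans_eq
    (div_mul_cancel₀ _ (by positivity))
  exact norm_sub_le_half_of_inexact_newton_step hA hβ hμ.le hβμ (hη₀ k) hημ hJ hlin (hres k)
end

section
/- Let F : ℝ^n → ℝ^n be continuously differentiable on a neighborhood of p* with F(p*) = 0 and DF(p*) invertible. Then there exist η̄ > 0 and ε > 0 such that: for every inexact Newton sequence (p_k) with forcing terms (η_k) satisfying η_k ≤ η̄ for all k and η_k → 0 as k → ∞, if ‖p_0 − p*‖ ≤ ε then p_k → p* q-superlinearly, i.e., p_k → p* and for every δ > 0 there exists K such that ‖p_{k+1} − p*‖ ≤ δ ‖p_k − p*‖ for all k ≥ K. -/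
open Filter Topology NNReal

/-!
If `‖f' y - A‖ ≤ θ` on a ball around the root `x*` and `K` bounds `A⁻¹`, two applications of the
mean value inequality show that one inexact Newton step from `x` with forcing term `η` satisfies
`‖x' - x*‖ ≤ 2K (η (‖A‖ + θ) + 2θ) ‖x - x*‖` once `Kθ ≤ 1/2`. The factor tends to `0` with `η`
and `θ`. Making it `1/2` on a small ball for all `η ≤ η̄` gives linear convergence from that ball;
since then `p k → x*` and `η k → 0`, the factor eventually drops below any `δ > 0`.
-/

section InexactNewtonStep

variable {E F : Type*} [NormedAddCommGroup E] [NormedSpace ℝ E]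
  [NormedAddCommGroup F] [NormedSpace ℝ F]

theorem ContinuousLinearMap.norm_le_two_mul_norm_apply_of_antilipschitz_of_norm_sub_le
    {A G : E →L[ℝ] F} {K : ℝ≥0} {θ : ℝ} (hA : AntilipschitzWith K A) (hGA : ‖G - A‖ ≤ θ)
    (hKθ : (K : ℝ) * θ ≤ 1 / 2) (e : E) : ‖e‖ ≤ 2 * (K : ℝ) * ‖G e‖ := by
  have hAe : ‖A e‖ ≤ ‖G e‖ + θ * ‖e‖ :=
    calc ‖A e‖ = ‖G e - (G - A) e‖ := by simp
      _ ≤ ‖G e‖ + ‖(G - A) e‖ := norm_sub_le _ _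
      _ ≤ ‖G e‖ + θ * ‖e‖ := by gcongr; exact (G - A).le_of_opNorm_le hGA e
  have hlower := A.bound_of_antilipschitz hA e
  nlinarith [K.coe_nonneg, norm_nonneg e, norm_nonneg (G e)]

theorem norm_sub_le_of_inexact_newton_step {f : E → F} {f' : E → E →L[ℝ] F} {A : E →L[ℝ] F}
    {s : Set E} {xstar x x' : E} {K : ℝ≥0} {θ η : ℝ} (hs : Convex ℝ s)
    (hf : ∀ y ∈ s, HasFDerivWithinAt f (f' y) s y) (hf'A : ∀ y ∈ s, ‖f' y - A‖ ≤ θ)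
    (hA : AntilipschitzWith K A) (hKθ : (K : ℝ) * θ ≤ 1 / 2) (hroot : f xstar = 0)
    (hxstar : xstar ∈ s) (hx : x ∈ s) (hη : 0 ≤ η)
    (hres : ‖f x + f' x (x' - x)‖ ≤ η * ‖f x‖) :
    ‖x' - xstar‖ ≤ 2 * (K : ℝ) * (η * (‖A‖ + θ) + 2 * θ) * ‖x - xstar‖ := by
  have hmvA : ‖f x - A (x - xstar)‖ ≤ θ * ‖x - xstar‖ := by
    simpa [hroot] using Convex.norm_image_sub_le_of_norm_hasFDerivWithin_le' hf hf'A hs hxstar hx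
  have hmvG : ‖f x - f' x (x - xstar)‖ ≤ 2 * θ * ‖x - xstar‖ := by
    have hf'x : ∀ y ∈ s, ‖f' y - f' x‖ ≤ 2 * θ := fun y hy =>
      calc ‖f' y - f' x‖ ≤ ‖f' y - A‖ + ‖A - f' x‖ := norm_sub_le_norm_sub_add_norm_sub _ _ _
        _ ≤ 2 * θ := by rw [norm_sub_rev A (f' x)]; linarith [hf'A y hy, hf'A x hx]
    simpa [hroot] using Convex.norm_image_sub_le_of_norm_hasFDerivWithin_le' hf hf'x hs hxstar hx
  have hfx : ‖f x‖ ≤ (‖A‖ + θ) * ‖x - xstar‖ :=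
    calc ‖f x‖ ≤ ‖f x - A (x - xstar)‖ + ‖A (x - xstar)‖ := norm_le_norm_sub_add _ _
      _ ≤ (‖A‖ + θ) * ‖x - xstar‖ := by linarith [A.le_opNorm (x - xstar)]
  have hstep : ‖f' x (x' - xstar)‖ ≤ η * ‖f x‖ + 2 * θ * ‖x - xstar‖ :=
    calc ‖f' x (x' - xstar)‖ = ‖(f x + f' x (x' - x)) - (f x - f' x (x - xstar))‖ := by
          congr 1; simp only [map_sub]; abel
      _ ≤ ‖f x + f' x (x' - x)‖ + ‖f x - f' x (x - xstar)‖ := norm_sub_le _ _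
      _ ≤ η * ‖f x‖ + 2 * θ * ‖x - xstar‖ := add_le_add hres hmvG
  calc ‖x' - xstar‖ ≤ 2 * (K : ℝ) * ‖f' x (x' - xstar)‖ :=
        ContinuousLinearMap.norm_le_two_mul_norm_apply_of_antilipschitz_of_norm_sub_le hA
          (hf'A x hx) hKθ _
    _ ≤ 2 * (K : ℝ) * (η * ((‖A‖ + θ) * ‖x - xstar‖) + 2 * θ * ‖x - xstar‖) := by
        gcongr
        exact hstep.trans (by gcongr)
    _ = 2 * (K : ℝ) * (η * (‖A‖ + θ) + 2 * θ) * ‖x - xstar‖ := by ring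

theorem exists_inexact_newton_step_contraction {f : E → F} {xstar : E} (A : E ≃L[ℝ] F)
    (hf : ContDiffAt ℝ 1 f xstar) (hA : fderiv ℝ f xstar = A) (hroot : f xstar = 0)
    {δ : ℝ} (hδ : 0 < δ) :
    ∃ ρ > 0, ∃ η₀ > 0, ∀ (x x' : E) (η : ℝ), ‖x - xstar‖ ≤ ρ → 0 ≤ η → η ≤ η₀ →
      ‖f x + fderiv ℝ f x (x' - x)‖ ≤ η * ‖f x‖ → ‖x' - xstar‖ ≤ δ * ‖x - xstar‖ := by
  set K := ‖(A.symm : F →L[ℝ] E)‖₊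
  set a := ‖(A : E →L[ℝ] F)‖
  have hsmall : ∀ᶠ θ in 𝓝 (0 : ℝ),
      (K : ℝ) * θ < 1 / 2 ∧ 2 * (K : ℝ) * (θ * (a + θ) + 2 * θ) < δ := by
    refine (Tendsto.eventually_lt_const one_half_pos ?_).and
      (Tendsto.eventually_lt_const hδ ?_) <;> exact Continuous.tendsto' (by fun_prop) 0 0 (by simp)
  -- One small `θ` serves both as the forcing bound and as the tolerance on `fderiv ℝ f y - A`.
  obtain ⟨θ, ⟨hKθ, hθδ⟩, hθ⟩ :=
    ((hsmall.filter_mono nhdsWithin_le_nhds).and (self_mem_nhdsWithin (s := Set.Ioi 0))).exists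
  have hnear : ∀ᶠ y in 𝓝 xstar, DifferentiableAt ℝ f y ∧ ‖fderiv ℝ f y - A‖ ≤ θ := by
    refine ((hf.eventually (by simp)).mono fun y hy => hy.differentiableAt one_ne_zero).and ?_
    have := hf.continuousAt_fderiv one_ne_zero
    rw [ContinuousAt, hA] at this
    simpa [← dist_eq_norm] using this.eventually (Metric.closedBall_mem_nhds _ hθ)
  obtain ⟨ρ, hρ, hball⟩ := Metric.nhds_basis_closedBall.mem_iff.1 hnear
  refine ⟨ρ, hρ, θ, hθ, fun x x' η hx hη hηθ hres => ?_⟩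
  calc ‖x' - xstar‖ ≤ 2 * (K : ℝ) * (η * (a + θ) + 2 * θ) * ‖x - xstar‖ :=
        norm_sub_le_of_inexact_newton_step (convex_closedBall xstar ρ)
          (fun y hy => (hball hy).1.hasFDerivAt.hasFDerivWithinAt) (fun y hy => (hball hy).2)
          A.antilipschitz hKθ.le hroot (Metric.mem_closedBall_self hρ.le)
          (mem_closedBall_iff_norm.2 hx) hη hres
    _ ≤ 2 * (K : ℝ) * (θ * (a + θ) + 2 * θ) * ‖x - xstar‖ := by gcongr
    _ ≤ δ * ‖x - xstar‖ := by gcongr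

end InexactNewtonStep

theorem tendsto_of_norm_sub_succ_le_mul {E : Type*} [SeminormedAddCommGroup E] {p : ℕ → E}
    {x : E} {ρ q : ℝ} (hq0 : 0 ≤ q) (hq1 : q < 1) (h0 : ‖p 0 - x‖ ≤ ρ)
    (hstep : ∀ k, ‖p k - x‖ ≤ ρ → ‖p (k + 1) - x‖ ≤ q * ‖p k - x‖) :
    Tendsto p atTop (𝓝 x) := by
  have hρ : 0 ≤ ρ := (norm_nonneg _).trans h0
  have hgeom : ∀ k, ‖p k - x‖ ≤ q ^ k * ρ := by
    intro k
    induction k with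
    | zero => simpa using h0
    | succ k ih =>
      have hk : ‖p k - x‖ ≤ ρ := ih.trans (mul_le_of_le_one_left hρ (pow_le_one₀ hq0 hq1.le))
      calc ‖p (k + 1) - x‖ ≤ q * ‖p k - x‖ := hstep k hk
        _ ≤ q * (q ^ k * ρ) := by gcongr
        _ = q ^ (k + 1) * ρ := by ring
  refine tendsto_iff_norm_sub_tendsto_zero.2 (squeeze_zero (fun _ => norm_nonneg _) hgeom ?_)
  simpa using (tendsto_pow_atTop_nhds_zero_of_lt_one hq0 hq1).mul_const ρ

/-- Local q-superlinear convergence of inexact Newton sequences whose forcing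
terms tend to zero. -/
theorem inexact_newton_qsuperlinear_convergence
    (n : ℕ) (F : EuclideanSpace ℝ (Fin n) → EuclideanSpace ℝ (Fin n))
    (pstar : EuclideanSpace ℝ (Fin n))
    (hF : ∃ U : Set (EuclideanSpace ℝ (Fin n)),
      IsOpen U ∧ pstar ∈ U ∧ ContDiffOn ℝ 1 F U)
    (hroot : F pstar = 0)
    (hinv : IsUnit (fderiv ℝ F pstar)) :
    ∃ ηbar > (0:ℝ), ∃ ε > (0:ℝ),
      ∀ (p : ℕ → EuclideanSpace ℝ (Fin n)) (η : ℕ → ℝ),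
        (∀ k, 0 ≤ η k) →
        (∀ k, η k ≤ ηbar) →
        Tendsto η atTop (𝓝 0) →
        (∀ k, ‖F (p k) + (fderiv ℝ F (p k)) (p (k+1) - p k)‖ ≤ η k * ‖F (p k)‖) →
        ‖p 0 - pstar‖ ≤ ε →
        Tendsto p atTop (𝓝 pstar) ∧
        ∀ δ > (0:ℝ), ∃ K : ℕ, ∀ k ≥ K,
          ‖p (k+1) - pstar‖ ≤ δ * ‖p k - pstar‖ := by
  obtain ⟨U, hU, hmem, hC⟩ := hF
  have hf : ContDiffAt ℝ 1 F pstar := hC.contDiffAt (hU.mem_nhds hmem)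
  obtain ⟨u, hu⟩ := hinv
  have hA : fderiv ℝ F pstar = ContinuousLinearEquiv.unitsEquiv ℝ _ u := by
    rw [← hu]; rfl
  obtain ⟨ε, hε, ηbar, hηbar, hhalf⟩ :=
    exists_inexact_newton_step_contraction _ hf hA hroot one_half_pos
  refine ⟨ηbar, hηbar, ε, hε, fun p η hη0 hηle hηlim hres hp0 => ?_⟩
  have hp : Tendsto p atTop (𝓝 pstar) := tendsto_of_norm_sub_succ_le_mul one_half_pos.le
    one_half_lt_one hp0 fun k hk => hhalf _ _ _ hk (hη0 k) (hηle k) (hres k)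
  refine ⟨hp, fun δ hδ => ?_⟩
  obtain ⟨ρ, hρ, η₀, hη₀, hcontr⟩ := exists_inexact_newton_step_contraction _ hf hA hroot hδ
  have hnear : ∀ᶠ k in atTop, ‖p k - pstar‖ ≤ ρ :=
    (tendsto_iff_norm_sub_tendsto_zero.1 hp).eventually (ge_mem_nhds hρ)
  have hsmall : ∀ᶠ k in atTop, η k ≤ η₀ := hηlim.eventually (ge_mem_nhds hη₀)
  obtain ⟨K, hK⟩ := (hnear.and hsmall).exists_forall_of_atTop
  exact ⟨K, fun k hk => hcontr _ _ _ (hK k hk).1 (hη0 k) (hK k hk).2 (hres k)⟩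
end

section
/- Let F : ℝ^n → ℝ^n be continuously differentiable on a neighborhood of p*, with F(p*) = 0, DF(p*) invertible, and with DF Lipschitz continuous on a neighborhood of p*. Let C > 0. Then there exist ε > 0 and C' > 0 such that: for every inexact Newton sequence (p_k) with forcing terms (η_k) satisfying η_k ≤ C ‖F(p_k)‖ for all k, if ‖p_0 − p*‖ ≤ ε then p_k → p* and ‖p_{k+1} − p*‖ ≤ C' ‖p_k − p*‖² for all k ≥ 0, i.e., the convergence is q-quadratic. -/
/-!
Write `A = F'(p*)` and let `B` be its inverse. For a step `q ↦ q'`,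
`A (q' - p*) = (A - F'(q)) (q' - p*) + (F(p*) - F(q) - F'(q) (p* - q)) + (F(q) + F'(q) (q' - q))`.
Lipschitz continuity of `F'` bounds the first term by `L ‖q - p*‖ ‖q' - p*‖`, which close to `p*`
can be absorbed into the left-hand side, and the second by `L ‖q - p*‖²`; the third is the
residual, at most `C ‖F(q)‖² ≤ C (‖A‖ + L)² ‖q - p*‖²`. Hence `‖q' - p*‖ ≤ c ‖q - p*‖²`, and once
`c ‖p₀ - p*‖ ≤ 1/2` the errors at least halve at every step, which keeps the iterates in the ball
where this estimate holds.
-/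

open Filter Topology

open scoped NNReal

section NewtonStep

variable {E G : Type*} [NormedAddCommGroup E] [NormedSpace ℝ E]
  [NormedAddCommGroup G] [NormedSpace ℝ G] {f : E → G} {s : Set E} {L : ℝ≥0} {x q q' : E}

theorem Convex.norm_image_sub_sub_fderiv_le_of_lipschitzOnWith (hs : Convex ℝ s)
    (hf : ∀ z ∈ s, DifferentiableAt ℝ f z) (hL : LipschitzOnWith L (fderiv ℝ f) s)
    {y : E} (hx : x ∈ s) (hy : y ∈ s) :
    ‖f y - f x - fderiv ℝ f x (y - x)‖ ≤ L * ‖y - x‖ ^ 2 := by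
  have hseg : segment ℝ x y ⊆ s := hs.segment_subset hx hy
  have bound : ∀ z ∈ segment ℝ x y, ‖fderiv ℝ f z - fderiv ℝ f x‖ ≤ L * ‖y - x‖ := fun z hz =>
    calc ‖fderiv ℝ f z - fderiv ℝ f x‖ ≤ L * ‖z - x‖ :=
          lipschitzOnWith_iff_norm_sub_le.1 hL (hseg hz) hx
      _ ≤ L * ‖y - x‖ := by gcongr; exact norm_sub_le_of_mem_segment hz
  calc ‖f y - f x - fderiv ℝ f x (y - x)‖ ≤ L * ‖y - x‖ * ‖y - x‖ :=
        (convex_segment x y).norm_image_sub_le_of_norm_fderiv_le' (fun z hz => hf z (hseg hz))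
          bound (left_mem_segment ℝ x y) (right_mem_segment ℝ x y)
    _ = L * ‖y - x‖ ^ 2 := by ring

theorem Convex.norm_image_le_of_lipschitzOnWith_fderiv (hs : Convex ℝ s)
    (hf : ∀ z ∈ s, DifferentiableAt ℝ f z) (hL : LipschitzOnWith L (fderiv ℝ f) s)
    (hx : x ∈ s) (hq : q ∈ s) (hfx : f x = 0) (hqx : ‖q - x‖ ≤ 1) :
    ‖f q‖ ≤ (‖fderiv ℝ f x‖ + L) * ‖q - x‖ := by
  have htaylor := hs.norm_image_sub_sub_fderiv_le_of_lipschitzOnWith hf hL hx hq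
  rw [hfx, sub_zero] at htaylor
  have hlin : ‖fderiv ℝ f x (q - x)‖ ≤ ‖fderiv ℝ f x‖ * ‖q - x‖ := (fderiv ℝ f x).le_opNorm _
  have hsq : (L : ℝ) * ‖q - x‖ ^ 2 ≤ L * ‖q - x‖ := by
    gcongr; exact pow_le_of_le_one (norm_nonneg _) hqx two_ne_zero
  calc ‖f q‖ ≤ ‖f q - fderiv ℝ f x (q - x)‖ + ‖fderiv ℝ f x (q - x)‖ := norm_le_norm_sub_add _ _
    _ ≤ (‖fderiv ℝ f x‖ + L) * ‖q - x‖ := by linarith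

theorem Convex.norm_newton_error_le (hs : Convex ℝ s)
    (hf : ∀ z ∈ s, DifferentiableAt ℝ f z) (hL : LipschitzOnWith L (fderiv ℝ f) s)
    (hx : x ∈ s) (hq : q ∈ s) (hfx : f x = 0) {B : G →L[ℝ] E}
    (hB : Function.LeftInverse B (fderiv ℝ f x)) :
    ‖q' - x‖ ≤ ‖B‖ * (L * ‖q - x‖ * ‖q' - x‖ + L * ‖q - x‖ ^ 2 +
      ‖f q + fderiv ℝ f q (q' - q)‖) := by
  set A := fderiv ℝ f x
  set D := fderiv ℝ f q
  have hsplit : A (q' - x) = (A - D) (q' - x) + (f x - f q - D (x - q)) + (f q + D (q' - q)) := by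
    rw [hfx]
    simp only [sub_apply, map_sub]
    abel
  have hmismatch : ‖A - D‖ ≤ L * ‖q - x‖ := lipschitzOnWith_iff_norm_sub_le.1 hL hx hq |>.trans_eq
    (by rw [norm_sub_rev])
  have hlinearisation : ‖f x - f q - D (x - q)‖ ≤ L * ‖q - x‖ ^ 2 := by
    simpa only [norm_sub_rev x q] using
      hs.norm_image_sub_sub_fderiv_le_of_lipschitzOnWith hf hL hq hx
  calc ‖q' - x‖ = ‖B (A (q' - x))‖ := by rw [hB]
    _ ≤ ‖B‖ * ‖A (q' - x)‖ := B.le_opNorm _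
    _ ≤ ‖B‖ * (‖A - D‖ * ‖q' - x‖ + L * ‖q - x‖ ^ 2 + ‖f q + D (q' - q)‖) := by
      gcongr
      rw [hsplit]
      refine norm_add₃_le.trans ?_
      gcongr
      exact (A - D).le_opNorm _
    _ ≤ _ := by gcongr

theorem Convex.norm_newton_error_le_mul_sq (hs : Convex ℝ s)
    (hf : ∀ z ∈ s, DifferentiableAt ℝ f z) (hL : LipschitzOnWith L (fderiv ℝ f) s)
    (hx : x ∈ s) (hq : q ∈ s) (hfx : f x = 0) {B : G →L[ℝ] E}
    (hB : Function.LeftInverse B (fderiv ℝ f x)) {K : ℝ} (hK : 0 ≤ K)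
    (hres : ‖f q + fderiv ℝ f q (q' - q)‖ ≤ K * ‖f q‖ ^ 2)
    (hqx : ‖q - x‖ ≤ 1) (hcontr : ‖B‖ * L * ‖q - x‖ ≤ 1 / 2) :
    ‖q' - x‖ ≤ 2 * ‖B‖ * (L + K * (‖fderiv ℝ f x‖ + L) ^ 2) * ‖q - x‖ ^ 2 := by
  have herr := hs.norm_newton_error_le (q' := q') hf hL hx hq hfx hB
  have hfq := hs.norm_image_le_of_lipschitzOnWith_fderiv hf hL hx hq hfx hqx
  have hres' : ‖f q + fderiv ℝ f q (q' - q)‖ ≤ K * (‖fderiv ℝ f x‖ + L) ^ 2 * ‖q - x‖ ^ 2 :=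
    calc _ ≤ K * ‖f q‖ ^ 2 := hres
      _ ≤ K * ((‖fderiv ℝ f x‖ + L) * ‖q - x‖) ^ 2 := by gcongr
      _ = _ := by ring
  have habsorb : ‖B‖ * (L * ‖q - x‖ * ‖q' - x‖) ≤ 1 / 2 * ‖q' - x‖ := by
    nlinarith [norm_nonneg (q' - x)]
  nlinarith [norm_nonneg B]

theorem exists_newton_quadratic_step {U : Set E} (hU : U ∈ 𝓝 x)
    (hf : ∀ z ∈ U, DifferentiableAt ℝ f z) (hL : LipschitzOnWith L (fderiv ℝ f) U) (hfx : f x = 0)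
    {B : G →L[ℝ] E} (hB : Function.LeftInverse B (fderiv ℝ f x)) {K : ℝ} (hK : 0 ≤ K) :
    ∃ ε > (0 : ℝ), ∃ c > (0 : ℝ), c * ε ≤ 1 / 2 ∧ ∀ q q' : E, ‖q - x‖ ≤ ε →
      ‖f q + fderiv ℝ f q (q' - q)‖ ≤ K * ‖f q‖ ^ 2 → ‖q' - x‖ ≤ c * ‖q - x‖ ^ 2 := by
  obtain ⟨r, hr, hball⟩ := Metric.mem_nhds_iff.1 hU
  set c := 2 * ‖B‖ * (L + K * (‖fderiv ℝ f x‖ + L) ^ 2) + 1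
  have hsmall (a : ℝ) : ∀ᶠ ε in 𝓝 0, a * ε ≤ 1 / 2 :=
    ((continuous_const_mul a).tendsto' 0 0 (mul_zero a)).eventually
      (eventually_le_nhds one_half_pos)
  obtain ⟨ε, hε, hεr, hε1, hεB, hεc⟩ : ∃ ε > (0 : ℝ), ε < r ∧ ε ≤ 1 ∧ ‖B‖ * L * ε ≤ 1 / 2 ∧
      c * ε ≤ 1 / 2 := by
    refine ((eventually_mem_nhdsWithin (a := (0 : ℝ)) (s := Set.Ioi 0)).and
      (nhdsWithin_le_nhds ?_)).exists
    filter_upwards [eventually_lt_nhds hr, eventually_le_nhds one_pos, hsmall (‖B‖ * L),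
      hsmall c] with ε h1 h2 h3 h4 using ⟨h1, h2, h3, h4⟩
  refine ⟨ε, hε, c, by positivity, hεc, fun q q' hq hres => ?_⟩
  have hqs : q ∈ Metric.ball x r := by rw [Metric.mem_ball, dist_eq_norm]; linarith
  have hcontr : ‖B‖ * L * ‖q - x‖ ≤ 1 / 2 := (by gcongr : ‖B‖ * L * ‖q - x‖ ≤ _).trans hεB
  refine (convex_ball x r).norm_newton_error_le_mul_sq (fun z hz => hf z (hball hz))
    (hL.mono hball) (Metric.mem_ball_self hr) hqs hfx hB hK hres (hq.trans hε1) hcontr |>.trans ?_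
  gcongr
  linarith

end NewtonStep

theorem norm_sub_le_geometric_of_quadratic_step {E : Type*} [SeminormedAddCommGroup E]
    {p : ℕ → E} {x : E} {ε c : ℝ} (hcε : c * ε ≤ 1 / 2)
    (hstep : ∀ k, ‖p k - x‖ ≤ ε → ‖p (k + 1) - x‖ ≤ c * ‖p k - x‖ ^ 2)
    (h0 : ‖p 0 - x‖ ≤ ε) (k : ℕ) : ‖p k - x‖ ≤ ε * (1 / 2) ^ k := by
  induction k with
  | zero => simpa using h0
  | succ k ih =>
    have hε : 0 ≤ ε := (norm_nonneg _).trans h0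
    have hk : ‖p k - x‖ ≤ ε :=
      ih.trans (mul_le_of_le_one_right hε (pow_le_one₀ (by norm_num) (by norm_num)))
    have hhalf : c * ‖p k - x‖ ^ 2 ≤ 1 / 2 * ‖p k - x‖ := by
      rcases le_total 0 c with hc | hc
      · nlinarith [norm_nonneg (p k - x), mul_le_mul_of_nonneg_left hk hc]
      · nlinarith [norm_nonneg (p k - x), sq_nonneg ‖p k - x‖]
    calc ‖p (k + 1) - x‖ ≤ 1 / 2 * ‖p k - x‖ := (hstep k hk).trans hhalf
      _ ≤ 1 / 2 * (ε * (1 / 2) ^ k) := by gcongr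
      _ = ε * (1 / 2) ^ (k + 1) := by ring

theorem tendsto_of_quadratic_step {E : Type*} [SeminormedAddCommGroup E]
    {p : ℕ → E} {x : E} {ε c : ℝ} (hcε : c * ε ≤ 1 / 2)
    (hstep : ∀ k, ‖p k - x‖ ≤ ε → ‖p (k + 1) - x‖ ≤ c * ‖p k - x‖ ^ 2)
    (h0 : ‖p 0 - x‖ ≤ ε) :
    Tendsto p atTop (𝓝 x) ∧ ∀ k, ‖p (k + 1) - x‖ ≤ c * ‖p k - x‖ ^ 2 := by
  have hgeom := norm_sub_le_geometric_of_quadratic_step hcε hstep h0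
  have hε : 0 ≤ ε := (norm_nonneg _).trans h0
  refine ⟨?_, fun k => hstep k ((hgeom k).trans ?_)⟩
  · rw [tendsto_iff_norm_sub_tendsto_zero]
    refine squeeze_zero (fun _ => norm_nonneg _) hgeom ?_
    simpa using (tendsto_pow_atTop_nhds_zero_of_lt_one (r := (1 / 2 : ℝ)) (by norm_num)
      (by norm_num)).const_mul ε
  · exact mul_le_of_le_one_right hε (pow_le_one₀ (by norm_num) (by norm_num))

/-- Local q-quadratic convergence of inexact Newton sequences with forcing terms
`η_k ≤ C ‖F(p_k)‖`, assuming the derivative is locally Lipschitz. -/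
theorem inexact_newton_qquadratic_convergence
    (n : ℕ) (F : EuclideanSpace ℝ (Fin n) → EuclideanSpace ℝ (Fin n))
    (pstar : EuclideanSpace ℝ (Fin n))
    (hF : ∃ U : Set (EuclideanSpace ℝ (Fin n)),
      IsOpen U ∧ pstar ∈ U ∧ ContDiffOn ℝ 1 F U)
    (hLip : ∃ V : Set (EuclideanSpace ℝ (Fin n)), ∃ L : NNReal,
      IsOpen V ∧ pstar ∈ V ∧ LipschitzOnWith L (fun x => fderiv ℝ F x) V)
    (hroot : F pstar = 0)
    (hinv : IsUnit (fderiv ℝ F pstar))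
    (C : ℝ) (hC : 0 < C) :
    ∃ ε > (0:ℝ), ∃ C' > (0:ℝ),
      ∀ (p : ℕ → EuclideanSpace ℝ (Fin n)) (η : ℕ → ℝ),
        (∀ k, 0 ≤ η k) →
        (∀ k, η k ≤ C * ‖F (p k)‖) →
        (∀ k, ‖F (p k) + (fderiv ℝ F (p k)) (p (k+1) - p k)‖ ≤ η k * ‖F (p k)‖) →
        ‖p 0 - pstar‖ ≤ ε →
        Tendsto p atTop (𝓝 pstar) ∧
        ∀ k, ‖p (k+1) - pstar‖ ≤ C' * ‖p k - pstar‖ ^ 2 := by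
  obtain ⟨U, hU, hpU, hFU⟩ := hF
  obtain ⟨V, L, hV, hpV, hLV⟩ := hLip
  have hdiff : ∀ z ∈ U ∩ V, DifferentiableAt ℝ F z := fun z hz =>
    (hFU.differentiableOn one_ne_zero z hz.1).differentiableAt (hU.mem_nhds hz.1)
  set e := ContinuousLinearEquiv.unitsEquiv ℝ _ hinv.unit
  obtain ⟨ε, hε, C', hC', hC'ε, hstep⟩ := exists_newton_quadratic_step
    ((hU.inter hV).mem_nhds ⟨hpU, hpV⟩) hdiff (hLV.mono Set.inter_subset_right) hroot
    (B := e.symm.toContinuousLinearMap) e.symm_apply_apply hC.le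
  refine ⟨ε, hε, C', hC', fun p η _ hηC hres h0 => tendsto_of_quadratic_step hC'ε
    (fun k hk => hstep (p k) (p (k + 1)) hk ?_) h0⟩
  calc _ ≤ η k * ‖F (p k)‖ := hres k
    _ ≤ C * ‖F (p k)‖ * ‖F (p k)‖ := by gcongr; exact hηC k
    _ = C * ‖F (p k)‖ ^ 2 := by ring
end

section
/- Let F : ℝ^n → ℝ^n be continuously differentiable on a neighborhood of p* with F(p*) = 0 and A := DF(p*) invertible. Let t and η̄ be given with 0 ≤ η̄ < t < 1. Then there exists ε > 0 such that: for every inexact Newton sequence (p_k) with forcing terms (η_k) satisfying η_k ≤ η̄ for all k, if ‖p_0 − p*‖ ≤ ε then the iterates contract in the weighted norm, namely ‖A (p_{k+1} − p*)‖ ≤ t ‖A (p_k − p*)‖ for all k ≥ 0. -/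
/-!
Write `A = DF(p*)` and `e = p - p*`. Near `p*` the derivative `DF(p)` is within `μ` of `A` and
`F(p) = A e + o(e)`, so both `F(p)` and the Newton step `d` are of the size of `A e`. Expanding
`A (e + d) = (F(p) + DF(p) d) + (A - DF(p)) d + (A e - F(p))`, the first term is at most
`η ‖F(p)‖ ≈ η ‖A e‖` and the other two are `O(μ ‖A⁻¹‖ ‖A e‖)`. Choosing `μ ‖A⁻¹‖` small compared
with `t - η̄` gives the contraction by `t` in the weighted norm `‖A ·‖`, and since this norm
does not increase, the iterates stay in the neighbourhood where the estimates hold.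
-/

open Filter Topology

variable {E G : Type*} [NormedAddCommGroup E] [NormedSpace ℝ E]
  [NormedAddCommGroup G] [NormedSpace ℝ G]

theorem ContinuousLinearMap.norm_le_norm_units_inv_mul (u : (E →L[ℝ] E)ˣ) (v : E) :
    ‖v‖ ≤ ‖(↑u⁻¹ : E →L[ℝ] E)‖ * ‖(u : E →L[ℝ] E) v‖ := by
  calc ‖v‖ = ‖(↑u⁻¹ : E →L[ℝ] E) ((u : E →L[ℝ] E) v)‖ := by
        rw [← mul_apply_eq_comp, Units.inv_mul, one_apply_eq_self]
    _ ≤ _ := ContinuousLinearMap.le_opNorm _ _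

theorem ContDiffAt.eventually_fderiv_sub_le_and_sub_apply_le {f : E → G} {x₀ : E}
    (hf : ContDiffAt ℝ 1 f x₀) {μ : ℝ} (hμ : 0 < μ) :
    ∀ᶠ x in 𝓝 x₀, ‖fderiv ℝ f x - fderiv ℝ f x₀‖ ≤ μ ∧
      ‖f x - f x₀ - fderiv ℝ f x₀ (x - x₀)‖ ≤ μ * ‖x - x₀‖ := by
  have hderiv : ∀ᶠ x in 𝓝 x₀, fderiv ℝ f x ∈ Metric.closedBall (fderiv ℝ f x₀) μ :=
    (hf.continuousAt_fderiv one_ne_zero).eventually (Metric.closedBall_mem_nhds _ hμ)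
  have htaylor := (hf.differentiableAt one_ne_zero).hasFDerivAt.isLittleO.def hμ
  filter_upwards [hderiv, htaylor] with x hx hx'
  exact ⟨mem_closedBall_iff_norm.mp hx, hx'⟩

namespace ContinuousLinearMap

variable {A J : E →L[ℝ] G} {b μ η : ℝ} {y : G} {d e : E}

theorem norm_le_of_norm_sub_apply_le (hb : ∀ v, ‖v‖ ≤ b * ‖A v‖) (hμ : 0 ≤ μ)
    (hy : ‖y - A e‖ ≤ μ * ‖e‖) : ‖y‖ ≤ (1 + μ * b) * ‖A e‖ := by
  have he : μ * ‖e‖ ≤ μ * (b * ‖A e‖) := mul_le_mul_of_nonneg_left (hb e) hμ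
  calc ‖y‖ = ‖A e + (y - A e)‖ := by rw [add_sub_cancel]
    _ ≤ ‖A e‖ + ‖y - A e‖ := norm_add_le _ _
    _ ≤ (1 + μ * b) * ‖A e‖ := by linarith

theorem norm_sub_apply_le (hJ : ‖J - A‖ ≤ μ) (v : E) : ‖A v - J v‖ ≤ μ * ‖v‖ := by
  calc ‖A v - J v‖ = ‖(J - A) v‖ := by rw [sub_apply, norm_sub_rev]
    _ ≤ ‖J - A‖ * ‖v‖ := le_opNorm _ _
    _ ≤ μ * ‖v‖ := by gcongr

-- The factor `2` bounds `1 / (1 - μ b)`.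
theorem norm_apply_le_of_norm_add_apply_le (hb : ∀ v, ‖v‖ ≤ b * ‖A v‖) (hμ : 0 ≤ μ)
    (hμb : μ * b ≤ 1 / 2) (hJ : ‖J - A‖ ≤ μ) (hres : ‖y + J d‖ ≤ η * ‖y‖) :
    ‖A d‖ ≤ 2 * (1 + η) * ‖y‖ := by
  have hJd : ‖J d‖ ≤ (1 + η) * ‖y‖ := by
    calc ‖J d‖ = ‖(y + J d) - y‖ := by rw [add_sub_cancel_left]
      _ ≤ ‖y + J d‖ + ‖y‖ := norm_sub_le _ _
      _ ≤ (1 + η) * ‖y‖ := by linarith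
  have hd : μ * ‖d‖ ≤ μ * b * ‖A d‖ := by
    rw [mul_assoc]; exact mul_le_mul_of_nonneg_left (hb d) hμ
  have hAd : ‖A d‖ ≤ (1 + η) * ‖y‖ + μ * b * ‖A d‖ := by
    calc ‖A d‖ = ‖J d + (A d - J d)‖ := by rw [add_sub_cancel]
      _ ≤ ‖J d‖ + ‖A d - J d‖ := norm_add_le _ _
      _ ≤ _ := by linarith [norm_sub_apply_le hJ d]
  nlinarith [norm_nonneg (A d)]

theorem norm_apply_add_le_of_norm_add_apply_le (hb : ∀ v, ‖v‖ ≤ b * ‖A v‖) (hb₀ : 0 ≤ b)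
    (hμ : 0 ≤ μ) (hμb : μ * b ≤ 1 / 2) (hη₀ : 0 ≤ η) (hη₁ : η ≤ 1) (hJ : ‖J - A‖ ≤ μ)
    (hy : ‖y - A e‖ ≤ μ * ‖e‖) (hres : ‖y + J d‖ ≤ η * ‖y‖) :
    ‖A (e + d)‖ ≤ (η + 8 * (μ * b)) * ‖A e‖ := by
  have hy' := norm_le_of_norm_sub_apply_le hb hμ hy
  set κ := μ * b
  have hκ : 0 ≤ κ := mul_nonneg hμ hb₀
  have hd : μ * ‖d‖ ≤ κ * (2 * (1 + η) * ((1 + κ) * ‖A e‖)) := by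
    calc μ * ‖d‖ ≤ κ * ‖A d‖ := by rw [mul_assoc]; exact mul_le_mul_of_nonneg_left (hb d) hμ
      _ ≤ _ := by
        gcongr
        exact (norm_apply_le_of_norm_add_apply_le hb hμ hμb hJ hres).trans (by gcongr)
  have he : μ * ‖e‖ ≤ κ * ‖A e‖ := by
    rw [mul_assoc]; exact mul_le_mul_of_nonneg_left (hb e) hμ
  -- `A (e + d)` is the residual, plus the errors of replacing `J` by `A` and `A e` by `y`.
  have hsplit : A (e + d) = (y + J d) + (A d - J d) + (A e - y) := by
    rw [map_add]; abel
  calc ‖A (e + d)‖ ≤ ‖y + J d‖ + ‖A d - J d‖ + ‖A e - y‖ := hsplit ▸ norm_add₃_le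
    _ ≤ η * ((1 + κ) * ‖A e‖) + κ * (2 * (1 + η) * ((1 + κ) * ‖A e‖)) + κ * ‖A e‖ := by
      rw [norm_sub_rev (A e)]
      have := mul_le_mul_of_nonneg_left hy' hη₀
      linarith [norm_sub_apply_le hJ d]
    _ ≤ (η + 8 * κ) * ‖A e‖ := by
      have hAe := norm_nonneg (A e)
      have : η * κ + 2 * κ * (1 + η) * (1 + κ) ≤ 7 * κ := by
        have : 0 ≤ 7 - η - 2 * (1 + η) * (1 + κ) := by nlinarith
        nlinarith [mul_nonneg hκ this]
      nlinarith [mul_le_mul_of_nonneg_right this hAe]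

end ContinuousLinearMap

theorem div_add_one_mul_lt {x b : ℝ} (hx : 0 < x) (hb : 0 ≤ b) : x / (b + 1) * b < x := by
  rw [div_mul_eq_mul_div, div_lt_iff₀ (by positivity)]
  nlinarith

theorem succ_le_mul_of_le_imp_succ_le_mul {u : ℕ → ℝ} {t R : ℝ} (hu : ∀ k, 0 ≤ u k)
    (ht : t ≤ 1) (h₀ : u 0 ≤ R) (hstep : ∀ k, u k ≤ R → u (k + 1) ≤ t * u k) (k : ℕ) :
    u (k + 1) ≤ t * u k := by
  have hle : ∀ k, u k ≤ R := by
    intro k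
    induction k with
    | zero => exact h₀
    | succ k ih => nlinarith [hstep k ih, hu k]
  exact hstep k (hle k)

/-- Inexact Newton iterates contract in the norm weighted by the Jacobian
`A = DF(p*)` (Dembo–Eisenstat–Steihaug, Thm. 2.3). -/
theorem inexact_newton_weighted_contraction
    (n : ℕ) (F : EuclideanSpace ℝ (Fin n) → EuclideanSpace ℝ (Fin n))
    (pstar : EuclideanSpace ℝ (Fin n))
    (hF : ∃ U : Set (EuclideanSpace ℝ (Fin n)),
      IsOpen U ∧ pstar ∈ U ∧ ContDiffOn ℝ 1 F U)
    (hroot : F pstar = 0)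
    (hinv : IsUnit (fderiv ℝ F pstar))
    (t ηbar : ℝ) (hηbar : 0 ≤ ηbar) (hηt : ηbar < t) (ht : t < 1) :
    ∃ ε > (0:ℝ),
      ∀ (p : ℕ → EuclideanSpace ℝ (Fin n)) (η : ℕ → ℝ),
        (∀ k, 0 ≤ η k) →
        (∀ k, η k ≤ ηbar) →
        (∀ k, ‖F (p k) + (fderiv ℝ F (p k)) (p (k+1) - p k)‖ ≤ η k * ‖F (p k)‖) →
        ‖p 0 - pstar‖ ≤ ε →
        ∀ k, ‖(fderiv ℝ F pstar) (p (k+1) - pstar)‖ ≤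
              t * ‖(fderiv ℝ F pstar) (p k - pstar)‖ := by
  obtain ⟨U, hU, hpU, hCD⟩ := hF
  set A := fderiv ℝ F pstar
  obtain ⟨u, hu⟩ := hinv
  set b := ‖(u⁻¹).val‖
  have hb : ∀ v, ‖v‖ ≤ b * ‖A v‖ := hu ▸ ContinuousLinearMap.norm_le_norm_units_inv_mul u
  have hb₀ : 0 ≤ b := norm_nonneg _
  have hκ : 0 < (t - ηbar) / 8 := by linarith
  set μ := (t - ηbar) / 8 / (b + 1)
  have hμ : 0 < μ := by positivity
  have hμb : μ * b < (t - ηbar) / 8 := div_add_one_mul_lt hκ hb₀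
  obtain ⟨r, hr, hloc⟩ := Metric.eventually_nhds_iff.mp
    ((hCD.contDiffAt (hU.mem_nhds hpU)).eventually_fderiv_sub_le_and_sub_apply_le hμ)
  set R := r / (b + 1)
  refine ⟨R / (‖A‖ + 1), by positivity, fun p η hη₀ hη hres hp₀ => ?_⟩
  refine succ_le_mul_of_le_imp_succ_le_mul (R := R) (fun k => norm_nonneg (A (p k - pstar)))
    ht.le ?_ fun k hk => ?_
  · calc ‖A (p 0 - pstar)‖ ≤ R / (‖A‖ + 1) * ‖A‖ := mul_comm ‖A‖ _ ▸ A.le_opNorm_of_le hp₀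
      _ ≤ R := (div_add_one_mul_lt (by positivity) (norm_nonneg A)).le
  · have hdist : dist (p k) pstar < r :=
      calc dist (p k) pstar = ‖p k - pstar‖ := dist_eq_norm _ _
        _ ≤ R * b := (hb _).trans (by rw [mul_comm]; gcongr)
        _ < r := div_add_one_mul_lt hr hb₀
    obtain ⟨hJ, hy⟩ := hloc hdist
    rw [hroot, sub_zero] at hy
    have hstep := A.norm_apply_add_le_of_norm_add_apply_le hb hb₀ hμ.le (by linarith)
      (hη₀ k) (by linarith [hη k]) hJ hy (hres k)
    rw [sub_add_sub_cancel'] at hstep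
    exact hstep.trans (by gcongr; linarith [hη k])
end

section
/- Let F : ℝ^n → ℝ^n be continuously differentiable on a neighborhood of p* with F(p*) = 0 and DF(p*) invertible. Then there exist η̄ ∈ (0,1) and ε > 0 such that: for every inexact Newton sequence (p_k) with forcing terms (η_k) satisfying η_k ≤ η̄ for all k, if ‖p_0 − p*‖ ≤ ε then ‖p_k − p*‖ ≤ ε for all k ≥ 0; consequently ‖p_{k+1} − p_k‖ ≤ 2ε for all k ≥ 0. -/
open Filter Topology Metric
open scoped NNReal

/-!
Write `e = x - x*` for the error, `d` for the step and `A = DF(x*)`. The identity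
`A (e + d) = (A e - F x) + (A - DF(x)) d + (F x + DF(x) d)` bounds the new error
`e + d` through the linearization error of `F` at the root `x*`, the drift of `DF`
away from `A` and the residual. All three are small multiples of `‖e‖` or `‖e + d‖` near `x*`, and
`A` is invertible, so once the forcing terms are small enough the error cannot grow,
and the closed ball around `x*` on which these bounds hold is invariant.
-/

section InexactNewton

variable {𝕜 E G : Type*} [NontriviallyNormedField 𝕜]
  [NormedAddCommGroup E] [NormedSpace 𝕜 E] [NormedAddCommGroup G] [NormedSpace 𝕜 G]

variable (𝕜) in
def IsInexactNewtonSeq (F : E → G) (p : ℕ → E) (η : ℕ → ℝ) : Prop :=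
  ∀ k, ‖F (p k) + fderiv 𝕜 F (p k) (p (k + 1) - p k)‖ ≤ η k * ‖F (p k)‖

section Step

variable {A J : E →L[𝕜] G} {v : G} {e d : E} {δ η : ℝ}

theorem norm_apply_add_le_of_inexact_step (hv : ‖v - A e‖ ≤ δ * ‖e‖) (hJ : ‖J - A‖ ≤ δ)
    (hres : ‖v + J d‖ ≤ η * ‖v‖) (hδ : 0 ≤ δ) (hη : 0 ≤ η) :
    ‖A (e + d)‖ ≤ (2 * δ + η * (‖A‖ + δ)) * ‖e‖ + δ * ‖e + d‖ := by
  have hd : ‖d‖ ≤ ‖e + d‖ + ‖e‖ := by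
    simpa using norm_sub_le (e + d) e
  have hvnorm : ‖v‖ ≤ (‖A‖ + δ) * ‖e‖ := by
    linarith [norm_le_norm_add_norm_sub' v (A e), A.le_opNorm e]
  calc ‖A (e + d)‖ = ‖-(v - A e) + -((J - A) d) + (v + J d)‖ := by
        congr 1
        simp only [map_add, FunLike.coe_sub, Pi.sub_apply]
        abel
    _ ≤ ‖v - A e‖ + ‖(J - A) d‖ + ‖v + J d‖ := norm_add₃_le.trans_eq (by simp only [norm_neg])
    _ ≤ δ * ‖e‖ + δ * (‖e + d‖ + ‖e‖) + η * ((‖A‖ + δ) * ‖e‖) := by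
        gcongr
        · exact ((J - A).le_opNorm d).trans (by gcongr)
        · exact hres.trans (by gcongr)
    _ = (2 * δ + η * (‖A‖ + δ)) * ‖e‖ + δ * ‖e + d‖ := by ring

theorem norm_add_le_of_inexact_step {K : ℝ≥0} (hA : AntilipschitzWith K A)
    (hsmall : K * (3 * δ + η * (‖A‖ + δ)) ≤ 1) (hv : ‖v - A e‖ ≤ δ * ‖e‖)
    (hJ : ‖J - A‖ ≤ δ) (hres : ‖v + J d‖ ≤ η * ‖v‖) (hδ : 0 ≤ δ) (hη : 0 ≤ η) :
    ‖e + d‖ ≤ ‖e‖ := by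
  have hnew : ‖e + d‖ ≤ K * ((2 * δ + η * (‖A‖ + δ)) * ‖e‖ + δ * ‖e + d‖) :=
    (ZeroHomClass.bound_of_antilipschitz A hA _).trans
      (by gcongr; exact norm_apply_add_le_of_inexact_step hv hJ hres hδ hη)
  -- `Kδ ≤ 1/3`, so `(1 - Kδ) ‖e + d‖ ≤ K (2δ + η (‖A‖ + δ)) ‖e‖ ≤ (1 - Kδ) ‖e‖`
  have hKδ : K * δ ≤ 1 / 3 := by
    nlinarith [mul_nonneg K.coe_nonneg (mul_nonneg hη (add_nonneg (norm_nonneg A) hδ))]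
  nlinarith [norm_nonneg e, norm_nonneg (e + d)]

end Step

theorem exists_inexact_newton_constants (α β : ℝ) :
    ∃ δ > 0, ∃ ηbar, 0 < ηbar ∧ ηbar < 1 ∧ β * (3 * δ + ηbar * (α + δ)) ≤ 1 := by
  have hlim : Tendsto (fun t : ℝ => β * (3 * t + t * (α + t))) (𝓝[>] 0) (𝓝 0) := by
    have hcont : Continuous fun t : ℝ => β * (3 * t + t * (α + t)) := by fun_prop
    simpa using (hcont.tendsto 0).mono_left nhdsWithin_le_nhds
  obtain ⟨t, hsmall, ht⟩ :=
    ((hlim.eventually (eventually_le_nhds one_pos)).and (Ioo_mem_nhdsGT one_pos)).exists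
  exact ⟨t, ht.1, t, ht.1, ht.2, hsmall⟩

theorem ContDiffAt.eventually_linearization_error_le {F : E → G} {x₀ : E}
    (hF : ContDiffAt 𝕜 1 F x₀) {δ : ℝ} (hδ : 0 < δ) :
    ∀ᶠ x in 𝓝 x₀, ‖F x - F x₀ - fderiv 𝕜 F x₀ (x - x₀)‖ ≤ δ * ‖x - x₀‖ ∧
      ‖fderiv 𝕜 F x - fderiv 𝕜 F x₀‖ ≤ δ := by
  have hlin := ((hF.differentiableAt one_ne_zero).hasFDerivAt.isLittleO).def hδ
  have hcont := (hF.continuousAt_fderiv one_ne_zero).eventually (closedBall_mem_nhds _ hδ)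
  filter_upwards [hlin, hcont] with x hx hx'
  exact ⟨hx, by simpa [dist_eq_norm] using hx'⟩

theorem IsInexactNewtonSeq.norm_sub_le {F : E → G} {p : ℕ → E} {η : ℕ → ℝ}
    (hp : IsInexactNewtonSeq 𝕜 F p η) {xstar : E} {A : E →L[𝕜] G} {K : ℝ≥0}
    {δ ηbar ε : ℝ} (hA : AntilipschitzWith K A) (hδ : 0 ≤ δ)
    (hsmall : K * (3 * δ + ηbar * (‖A‖ + δ)) ≤ 1) (hη0 : ∀ k, 0 ≤ η k) (hη : ∀ k, η k ≤ ηbar)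
    (hball : ∀ x ∈ closedBall xstar ε,
      ‖F x - A (x - xstar)‖ ≤ δ * ‖x - xstar‖ ∧ ‖fderiv 𝕜 F x - A‖ ≤ δ)
    (h0 : ‖p 0 - xstar‖ ≤ ε) (k : ℕ) :
    ‖p k - xstar‖ ≤ ε := by
  induction k with
  | zero => exact h0
  | succ k ih =>
    obtain ⟨hlin, hJ⟩ := hball (p k) (mem_closedBall_iff_norm.2 ih)
    have hsmall_k : K * (3 * δ + η k * (‖A‖ + δ)) ≤ 1 :=
      le_trans (by gcongr; exact hη k) hsmall
    have hstep := norm_add_le_of_inexact_step hA hsmall_k hlin hJ (hp k) hδ (hη0 k)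
    rw [sub_add_sub_cancel'] at hstep
    exact hstep.trans ih

end InexactNewton

/-- Inexact Newton iterates started close to the root stay in the ε-ball around
it; consequently consecutive iterates are at most 2ε apart. -/
theorem inexact_newton_iterates_stay_in_ball
    (n : ℕ) (F : EuclideanSpace ℝ (Fin n) → EuclideanSpace ℝ (Fin n))
    (pstar : EuclideanSpace ℝ (Fin n))
    (hF : ∃ U : Set (EuclideanSpace ℝ (Fin n)),
      IsOpen U ∧ pstar ∈ U ∧ ContDiffOn ℝ 1 F U)
    (hroot : F pstar = 0)
    (hinv : IsUnit (fderiv ℝ F pstar)) :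
    ∃ ηbar : ℝ, 0 < ηbar ∧ ηbar < 1 ∧ ∃ ε > (0:ℝ),
      ∀ (p : ℕ → EuclideanSpace ℝ (Fin n)) (η : ℕ → ℝ),
        (∀ k, 0 ≤ η k) →
        (∀ k, η k ≤ ηbar) →
        (∀ k, ‖F (p k) + (fderiv ℝ F (p k)) (p (k+1) - p k)‖ ≤ η k * ‖F (p k)‖) →
        ‖p 0 - pstar‖ ≤ ε →
        (∀ k, ‖p k - pstar‖ ≤ ε) ∧
        (∀ k, ‖p (k+1) - p k‖ ≤ 2 * ε) := by
  obtain ⟨U, hU, hpU, hC⟩ := hF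
  have hCx : ContDiffAt ℝ 1 F pstar := hC.contDiffAt (hU.mem_nhds hpU)
  set A := fderiv ℝ F pstar
  obtain ⟨K, hK⟩ : ∃ K, AntilipschitzWith K A :=
    ⟨_, (ContinuousLinearEquiv.unitsEquiv ℝ _ hinv.unit).antilipschitz⟩
  obtain ⟨δ, hδ, ηbar, hηbar, hηbar_lt, hsmall⟩ := exists_inexact_newton_constants ‖A‖ K
  obtain ⟨ε, hε, hball⟩ :=
    nhds_basis_closedBall.eventually_iff.1 (hCx.eventually_linearization_error_le hδ)
  refine ⟨ηbar, hηbar, hηbar_lt, ε, hε, fun p η hη0 hη hp h0 => ?_⟩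
  have hstay : ∀ k, ‖p k - pstar‖ ≤ ε :=
    IsInexactNewtonSeq.norm_sub_le hp hK hδ.le hsmall hη0 hη
      (fun x hx => by simpa [hroot] using hball hx) h0
  refine ⟨hstay, fun k => ?_⟩
  calc ‖p (k + 1) - p k‖ ≤ ‖p (k + 1) - pstar‖ + ‖pstar - p k‖ :=
        norm_sub_le_norm_sub_add_norm_sub ..
    _ ≤ 2 * ε := by rw [norm_sub_rev pstar]; linarith [hstay k, hstay (k + 1)]
end

section
/- Let F : ℝ^n → ℝ^n be continuously differentiable on a neighborhood of p* with F(p*) = 0 and DF(p*) invertible. Then there exists ε > 0 such that for every p_0 with ‖p_0 − p*‖ ≤ ε, the exact Newton iteration p_{k+1} = p_k − DF(p_k)⁻¹ F(p_k) is well defined (DF(p_k) is invertible for every k), all iterates remain in the ε-ball around p*, and p_k converges to p* q-superlinearly, i.e., for every δ > 0 there exists K such that ‖p_{k+1} − p*‖ ≤ δ ‖p_k − p*‖ for all k ≥ K. -/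
/-!
The Newton error is `T x - p* = DF(x)⁻¹ (DF(x) (x - p*) - F x)`. Since `F p* = 0`, the residual
`DF(x) (x - p*) - F x` is `(DF(x) - DF(p*)) (x - p*) - (F x - F p* - DF(p*) (x - p*))`, which is
`o(‖x - p*‖)` by continuity of `DF` and differentiability of `F` at `p*`; and `DF(x)⁻¹` stays
bounded near `p*` because inversion is continuous on the open set of units. So the Newton map `T`
satisfies `T x - p* = o(x - p*)`. Any such map contracts by `1/2` on a small ball around `p*`, so its
orbits from that ball converge geometrically, and then `o(x - p*)` is exactly q-superlinearity.
-/

open Filter Topology Metric Asymptotics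

section Orbit

variable {E : Type*} [SeminormedAddCommGroup E] {a : E}

theorem norm_sub_le_pow_mul_and_le_of_contracting {ε c : ℝ} {p : ℕ → E} (hc0 : 0 ≤ c) (hc1 : c ≤ 1)
    (hstep : ∀ k, ‖p k - a‖ ≤ ε → ‖p (k + 1) - a‖ ≤ c * ‖p k - a‖) (h0 : ‖p 0 - a‖ ≤ ε)
    (k : ℕ) : ‖p k - a‖ ≤ c ^ k * ‖p 0 - a‖ ∧ ‖p k - a‖ ≤ ε := by
  induction k with
  | zero => simpa using h0
  | succ k ih =>
    have hgeom : ‖p (k + 1) - a‖ ≤ c ^ (k + 1) * ‖p 0 - a‖ :=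
      calc ‖p (k + 1) - a‖ ≤ c * ‖p k - a‖ := hstep k ih.2
        _ ≤ c * (c ^ k * ‖p 0 - a‖) := by gcongr; exact ih.1
        _ = c ^ (k + 1) * ‖p 0 - a‖ := by ring
    exact ⟨hgeom, hgeom.trans <|
      (mul_le_of_le_one_left (norm_nonneg _) (pow_le_one₀ hc0 hc1)).trans h0⟩

theorem exists_pos_orbit_tendsto_superlinearly {T : E → E} {P : E → Prop}
    (hT : (fun x => T x - a) =o[𝓝 a] fun x => x - a) (hP : ∀ᶠ x in 𝓝 a, P x) :
    ∃ ε > (0 : ℝ), ∀ p : ℕ → E, ‖p 0 - a‖ ≤ ε → (∀ k, p (k + 1) = T (p k)) →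
      (∀ k, P (p k)) ∧ (∀ k, ‖p k - a‖ ≤ ε) ∧ Tendsto p atTop (𝓝 a) ∧
      ∀ δ > (0 : ℝ), ∃ K : ℕ, ∀ k ≥ K, ‖p (k + 1) - a‖ ≤ δ * ‖p k - a‖ := by
  obtain ⟨ε, hε, hball⟩ :=
    nhds_basis_closedBall.eventually_iff.1 ((hT.bound one_half_pos).and hP)
  have hball' : ∀ x, ‖x - a‖ ≤ ε → ‖T x - a‖ ≤ 1 / 2 * ‖x - a‖ ∧ P x := fun x hx =>
    hball (by rwa [mem_closedBall, dist_eq_norm])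
  refine ⟨ε, hε, fun p h0 hrec => ?_⟩
  have horbit := norm_sub_le_pow_mul_and_le_of_contracting (by norm_num) (by norm_num)
    (fun k hk => hrec k ▸ (hball' _ hk).1) h0
  have htend : Tendsto p atTop (𝓝 a) := by
    refine tendsto_iff_norm_sub_tendsto_zero.2 <|
      squeeze_zero (fun _ => norm_nonneg _) (fun k => (horbit k).1) ?_
    simpa using (tendsto_pow_atTop_nhds_zero_of_lt_one (by norm_num)
      (by norm_num : (1 / 2 : ℝ) < 1)).mul_const ‖p 0 - a‖
  refine ⟨fun k => (hball' _ (horbit k).2).2, fun k => (horbit k).2, htend, fun δ hδ => ?_⟩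
  obtain ⟨K, hK⟩ := eventually_atTop.1 (htend.eventually (hT.bound hδ))
  exact ⟨K, fun k hk => hrec k ▸ hK k hk⟩

end Orbit

section Newton

variable {E : Type*} [NormedAddCommGroup E] [NormedSpace ℝ E] {F : E → E} {a : E}

noncomputable def newtonStep (F : E → E) (x : E) : E :=
  x - Ring.inverse (fderiv ℝ F x) (F x)

theorem sub_inverse_apply_sub_eq {A : E →L[ℝ] E} (hA : IsUnit A) (x y : E) :
    x - Ring.inverse A y - a = Ring.inverse A (A (x - a) - y) := by
  have hcancel : Ring.inverse A (A (x - a)) = x - a := by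
    rw [← mul_apply_eq_comp, Ring.inverse_mul_cancel A hA, one_apply_eq_self]
  rw [map_sub, hcancel]
  abel

theorem isLittleO_fderiv_apply_sub_sub (hd : DifferentiableAt ℝ F a)
    (hc : ContinuousAt (fderiv ℝ F) a) :
    (fun x => fderiv ℝ F x (x - a) - (F x - F a)) =o[𝓝 a] fun x => x - a := by
  have hvar : (fun x => (fderiv ℝ F x - fderiv ℝ F a) (x - a)) =o[𝓝 a] fun x => x - a := by
    have h0 : (fun x => fderiv ℝ F x - fderiv ℝ F a) =o[𝓝 a] (fun _ => (1 : ℝ)) :=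
      (isLittleO_one_iff ℝ).2 (tendsto_sub_nhds_zero_iff.2 hc.tendsto)
    simpa using isBoundedBilinearMap_apply.isBigO_comp.trans_isLittleO
      (h0.norm_left.mul_isBigO (isBigO_refl (fun x => ‖x - a‖) _)).norm_right
  refine (hvar.sub hd.hasFDerivAt.isLittleO).congr_left fun x => ?_
  rw [sub_apply]
  abel

variable [CompleteSpace E]

theorem eventually_isUnit_fderiv (hc : ContinuousAt (fderiv ℝ F) a)
    (hinv : IsUnit (fderiv ℝ F a)) : ∀ᶠ x in 𝓝 a, IsUnit (fderiv ℝ F x) :=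
  hc.eventually (Units.isOpen.mem_nhds hinv)

theorem isLittleO_newtonStep_sub (hd : DifferentiableAt ℝ F a)
    (hc : ContinuousAt (fderiv ℝ F) a) (hinv : IsUnit (fderiv ℝ F a)) (hroot : F a = 0) :
    (fun x => newtonStep F x - a) =o[𝓝 a] fun x => x - a := by
  have hbdd : (fun x => Ring.inverse (fderiv ℝ F x)) =O[𝓝 a] (fun _ => (1 : ℝ)) := by
    have hcont := NormedRing.inverse_continuousAt hinv.unit
    rw [hinv.unit_spec] at hcont
    exact (hcont.comp hc).isBigO_one ℝ
  have hres : (fun x => fderiv ℝ F x (x - a) - F x) =o[𝓝 a] fun x => x - a := by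
    simpa [hroot] using isLittleO_fderiv_apply_sub_sub hd hc
  have herr : (fun x => Ring.inverse (fderiv ℝ F x) (fderiv ℝ F x (x - a) - F x))
      =o[𝓝 a] fun x => x - a := by
    simpa using isBoundedBilinearMap_apply.isBigO_comp.trans_isLittleO
      (hbdd.norm_left.mul_isLittleO hres.norm_left.norm_right).norm_right
  exact herr.congr' ((eventually_isUnit_fderiv hc hinv).mono fun x hx =>
    (sub_inverse_apply_sub_eq hx _ _).symm) .rfl

end Newton

/-- Local q-superlinear convergence of the exact Newton method for a
continuously differentiable map with invertible Jacobian at the root. -/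
theorem newton_qsuperlinear_convergence
    (n : ℕ) (F : EuclideanSpace ℝ (Fin n) → EuclideanSpace ℝ (Fin n))
    (pstar : EuclideanSpace ℝ (Fin n))
    (hF : ∃ U : Set (EuclideanSpace ℝ (Fin n)),
      IsOpen U ∧ pstar ∈ U ∧ ContDiffOn ℝ 1 F U)
    (hroot : F pstar = 0)
    (hinv : IsUnit (fderiv ℝ F pstar)) :
    ∃ ε > (0:ℝ),
      ∀ p : ℕ → EuclideanSpace ℝ (Fin n),
        ‖p 0 - pstar‖ ≤ ε →
        (∀ k, p (k+1) = p k - Ring.inverse (fderiv ℝ F (p k)) (F (p k))) →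
        (∀ k, IsUnit (fderiv ℝ F (p k))) ∧
        (∀ k, ‖p k - pstar‖ ≤ ε) ∧
        Tendsto p atTop (𝓝 pstar) ∧
        (∀ δ > (0:ℝ), ∃ K : ℕ, ∀ k ≥ K,
          ‖p (k+1) - pstar‖ ≤ δ * ‖p k - pstar‖) := by
  obtain ⟨U, hU, hpU, hC1⟩ := hF
  have hF' : ContDiffAt ℝ 1 F pstar := hC1.contDiffAt (hU.mem_nhds hpU)
  have hc := hF'.continuousAt_fderiv one_ne_zero
  exact exists_pos_orbit_tendsto_superlinearly
    (isLittleO_newtonStep_sub (hF'.differentiableAt one_ne_zero) hc hinv hroot)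
    (eventually_isUnit_fderiv hc hinv)
end

section
/- Let H be a real n×n matrix, c ∈ ℝ^n, G a real m×n matrix, and b ∈ ℝ^m, and suppose the affine set {s ∈ ℝ^n : G s = b} is nonempty and that uᵀ H u > 0 for every u ≠ 0 with G u = 0. Then the quadratic function φ(s) = (1/2) sᵀ H s + cᵀ s attains its minimum over {s : G s = b} at exactly one point; i.e., there exists a unique s* with G s* = b such that φ(s*) ≤ φ(s) for all s with G s = b. -/
open Matrix

/-- An equality-constrained quadratic program whose Hessian is positive definite
on the null space of the constraint matrix has a unique minimizer. -/
theorem quadratic_unique_minimizer_on_affine (n m : ℕ)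
    (H : Matrix (Fin n) (Fin n) ℝ) (c : Fin n → ℝ)
    (G : Matrix (Fin m) (Fin n) ℝ) (b : Fin m → ℝ)
    (hfeas : ∃ s : Fin n → ℝ, G.mulVec s = b)
    (hpos : ∀ u : Fin n → ℝ, u ≠ 0 → G.mulVec u = 0 → 0 < u ⬝ᵥ H.mulVec u) :
    ∃! sstar : Fin n → ℝ, G.mulVec sstar = b ∧
      ∀ s : Fin n → ℝ, G.mulVec s = b →
        (1/2) * (sstar ⬝ᵥ H.mulVec sstar) + c ⬝ᵥ sstar ≤
        (1/2) * (s ⬝ᵥ H.mulVec s) + c ⬝ᵥ s := by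
  obtain ⟨s0, hs0⟩ := hfeas
  set K : Submodule ℝ (Fin n → ℝ) := LinearMap.ker (Matrix.mulVecLin G) with hK
  -- the key algebraic expansion
  have expand : ∀ v w : Fin n → ℝ,
      (1/2) * ((v + w) ⬝ᵥ H.mulVec (v + w)) + c ⬝ᵥ (v + w) =
      ((1/2) * (v ⬝ᵥ H.mulVec v) + c ⬝ᵥ v)
        + (1/2) * (v ⬝ᵥ H.mulVec w + w ⬝ᵥ H.mulVec v + 2 * (c ⬝ᵥ w))
        + (1/2) * (w ⬝ᵥ H.mulVec w) := by
    intro v w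
    simp only [Matrix.mulVec_add, dotProduct_add, add_dotProduct]
    ring
  -- the symmetric bilinear map as a map K → Dual K
  let T : K →ₗ[ℝ] Module.Dual ℝ K :=
    { toFun := fun u =>
        { toFun := fun w => (u : Fin n → ℝ) ⬝ᵥ H.mulVec w + (w : Fin n → ℝ) ⬝ᵥ H.mulVec u
          map_add' := by
            intro x y
            simp only [Submodule.coe_add, Matrix.mulVec_add, dotProduct_add, add_dotProduct]
            ring
          map_smul' := by
            intro r x
            simp only [Submodule.coe_smul, Matrix.mulVec_smul, dotProduct_smul,
              smul_dotProduct, smul_eq_mul, RingHom.id_apply]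
            ring }
      map_add' := by
        intro x y
        ext w
        simp only [Submodule.coe_add, Matrix.mulVec_add, dotProduct_add, add_dotProduct,
          LinearMap.coe_mk, AddHom.coe_mk, LinearMap.add_apply]
        ring
      map_smul' := by
        intro r x
        ext w
        simp only [Submodule.coe_smul, Matrix.mulVec_smul, dotProduct_smul,
          smul_dotProduct, smul_eq_mul, RingHom.id_apply, LinearMap.coe_mk, AddHom.coe_mk,
          LinearMap.smul_apply]
        ring }
  have hTinj : Function.Injective T := by
    rw [← LinearMap.ker_eq_bot, Submodule.eq_bot_iff]
    intro u hu
    by_contra hne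
    have hu0 : (u : Fin n → ℝ) ≠ 0 := fun h => hne (Subtype.ext h)
    have hmem : G.mulVec (u : Fin n → ℝ) = 0 := u.2
    have hpu := hpos u hu0 hmem
    have : (T u) u = 0 := by rw [hu]; rfl
    have h2 : (u : Fin n → ℝ) ⬝ᵥ H.mulVec u + (u : Fin n → ℝ) ⬝ᵥ H.mulVec u = 0 := this
    linarith
  have hTsurj : Function.Surjective T :=
    (LinearMap.injective_iff_surjective_of_finrank_eq_finrank
      Subspace.dual_finrank_eq.symm).mp hTinj
  -- the linear functional we want to hit
  let ℓ : Module.Dual ℝ K :=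
    { toFun := fun w => -(s0 ⬝ᵥ H.mulVec w + (w : Fin n → ℝ) ⬝ᵥ H.mulVec s0 + 2 * (c ⬝ᵥ w))
      map_add' := by
        intro x y
        simp only [Submodule.coe_add, Matrix.mulVec_add, dotProduct_add, add_dotProduct]
        ring
      map_smul' := by
        intro r x
        simp only [Submodule.coe_smul, Matrix.mulVec_smul, dotProduct_smul,
          smul_dotProduct, smul_eq_mul, RingHom.id_apply]
        ring }
  obtain ⟨u0, hu0⟩ := hTsurj ℓ
  set sstar : Fin n → ℝ := s0 + (u0 : Fin n → ℝ) with hsstar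
  have hfeas' : G.mulVec sstar = b := by
    have : G.mulVec (u0 : Fin n → ℝ) = 0 := u0.2
    simp [hsstar, Matrix.mulVec_add, hs0, this]
  -- first-order term vanishes
  have hcrit : ∀ w : Fin n → ℝ, G.mulVec w = 0 →
      sstar ⬝ᵥ H.mulVec w + w ⬝ᵥ H.mulVec sstar + 2 * (c ⬝ᵥ w) = 0 := by
    intro w hw
    have hwK : w ∈ K := hw
    have := congrFun (congrArg (fun f => f.toFun) hu0) ⟨w, hwK⟩
    have hTw : (u0 : Fin n → ℝ) ⬝ᵥ H.mulVec w + w ⬝ᵥ H.mulVec u0 =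
        -(s0 ⬝ᵥ H.mulVec w + w ⬝ᵥ H.mulVec s0 + 2 * (c ⬝ᵥ w)) := this
    simp only [hsstar, Matrix.mulVec_add, dotProduct_add, add_dotProduct]
    linarith
  -- the minimality property
  have hmin : ∀ s : Fin n → ℝ, G.mulVec s = b →
      (1/2) * (sstar ⬝ᵥ H.mulVec sstar) + c ⬝ᵥ sstar + (1/2) * ((s - sstar) ⬝ᵥ H.mulVec (s - sstar)) =
      (1/2) * (s ⬝ᵥ H.mulVec s) + c ⬝ᵥ s := by
    intro s hs
    have hw : G.mulVec (s - sstar) = 0 := by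
      simp [Matrix.mulVec_sub, hs, hfeas']
    have h1 := expand sstar (s - sstar)
    rw [add_sub_cancel] at h1
    rw [h1, hcrit _ hw]
    ring
  have hwpos : ∀ w : Fin n → ℝ, G.mulVec w = 0 → 0 ≤ w ⬝ᵥ H.mulVec w := by
    intro w hw
    rcases eq_or_ne w 0 with h | h
    · simp [h]
    · exact (hpos w h hw).le
  refine ⟨sstar, ⟨hfeas', fun s hs => ?_⟩, ?_⟩
  · have := hmin s hs
    have hge := hwpos (s - sstar) (by simp [Matrix.mulVec_sub, hs, hfeas'])
    linarith
  · rintro s' ⟨hs'feas, hs'min⟩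
    have h1 := hmin s' hs'feas
    have h2 := hs'min sstar hfeas'
    have hle : (s' - sstar) ⬝ᵥ H.mulVec (s' - sstar) ≤ 0 := by linarith
    by_contra hne
    have hwne : s' - sstar ≠ 0 := sub_ne_zero_of_ne hne
    have := hpos _ hwne (by simp [Matrix.mulVec_sub, hs'feas, hfeas'])
    linarith
end
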